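/- arXiv:2605.10163 — 9 statements merged into one kernel-verified Lean document; each statement's English description precedes it below -/
import Mathlib

section
/- Let E be an edge relation on V and let χ : V → C be the quotient map onto the SCC equivalence classes of E (so χ u = χ v iff u and v are in the same SCC of E). Then the quotient edge relation E_χ is acyclic: Relation.TransGen E_χ is irreflexive. In other words, the condensation of a directed graph is a DAG, so the SCC partition is a valid DAG-coarsening. -/
/-- Vertices `u` and `v` are in the same strongly connected component of `E`. -/
def SCCEq {V : Type*} (E : V → V → Prop) (u v : V) : Prop :=
  Relation.ReflTransGen E u v ∧ Relation.ReflTransGen E v u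

/-- The quotient edge relation induced on clusters by a map `χ : V → C`. -/
def QuotientEdge {V C : Type*} (E : V → V → Prop) (χ : V → C) (c c' : C) : Prop :=
  c ≠ c' ∧ ∃ u v, E u v ∧ χ u = c ∧ χ v = c'

lemma transGen_reach {V C : Type*} (E : V → V → Prop) (χ : V → C)
    (hχ : ∀ u v, χ u = χ v ↔ SCCEq E u v) {c c' : C}
    (h : Relation.TransGen (QuotientEdge E χ) c c') :
    ∀ u v, χ u = c → χ v = c' → Relation.ReflTransGen E u v := by
  induction h with
  | single h =>
    intro u v hu hv
    obtain ⟨_, a, b, hab, ha, hb⟩ := h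
    have h1 := ((hχ u a).mp (hu.trans ha.symm)).1
    have h2 := ((hχ b v).mp (hb.trans hv.symm)).1
    exact (h1.tail hab).trans h2
  | tail h' hQE ih =>
    intro u v hu hv
    obtain ⟨_, a, b, hab, ha, hb⟩ := hQE
    have h2 := ((hχ b v).mp (hb.trans hv.symm)).1
    exact ((ih u a hu ha).tail hab).trans h2

/-- the condensation of a directed graph is a DAG, so the SCC
partition is a valid DAG-coarsening. -/
theorem condensation_acyclic {V C : Type*} (E : V → V → Prop) (χ : V → C)
    (hχ : ∀ u v, χ u = χ v ↔ SCCEq E u v) :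
    Irreflexive (Relation.TransGen (QuotientEdge E χ)) := by
  intro c hc
  cases hc with
  | single h => exact h.1 rfl
  | @tail c' _ h' h =>
    obtain ⟨hne, a, b, hab, ha, hb⟩ := h
    have hreach := transGen_reach E χ hχ h' b a hb ha
    have : χ a = χ b := (hχ a b).mpr ⟨Relation.ReflTransGen.single hab, hreach⟩
    exact hne (ha ▸ hb ▸ this)
end

section
/- Let E be an edge relation on V, let c₀, …, c_{k−1} (k ≥ 1, pairwise distinct) be a directed cycle in E, and let E' be the edge relation obtained by reversing this cycle. Then E and E' have the same reachability relation: for all u, v, u reaches v under the reflexive-transitive closure of E if and only if u reaches v under the reflexive-transitive closure of E'. -/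
/-- `c 0, …, c (k-1)` is a directed cycle in `E`: `k ≥ 1`, the vertices are
pairwise distinct, and `E (c i) (c ((i+1) mod k))` for every `i < k`. -/
def IsDirectedCycle {V : Type*} (E : V → V → Prop) (k : ℕ) (c : ℕ → V) : Prop :=
  1 ≤ k ∧ (∀ i < k, ∀ j < k, c i = c j → i = j) ∧ ∀ i < k, E (c i) (c ((i + 1) % k))

/-- The edge relation obtained from `E` by reversing the cycle `c 0, …, c (k-1)`:
each cycle edge is removed and its reverse added; all other edges are unchanged. -/
def ReverseCycle {V : Type*} (E : V → V → Prop) (k : ℕ) (c : ℕ → V) (u v : V) : Prop :=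
  (E u v ∧ ¬ ∃ i < k, u = c i ∧ v = c ((i + 1) % k)) ∨
    ∃ i < k, u = c ((i + 1) % k) ∧ v = c i

private lemma rtg_lift {V : Type*} {R S : V → V → Prop}
    (h : ∀ a b, R a b → Relation.ReflTransGen S a b) {u v : V}
    (huv : Relation.ReflTransGen R u v) : Relation.ReflTransGen S u v := by
  induction huv with
  | refl => exact .refl
  | tail _ h2 ih => exact ih.trans (h _ _ h2)

/-- forward cycle: reach anywhere along forward edges -/
private lemma cycle_fwd {V : Type*} {R : V → V → Prop} {k : ℕ} {c : ℕ → V}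
    (hk : 1 ≤ k) (hR : ∀ i < k, R (c i) (c ((i + 1) % k))) :
    ∀ a < k, ∀ b < k, Relation.ReflTransGen R (c a) (c b) := by
  have key : ∀ m a, a < k → Relation.ReflTransGen R (c a) (c ((a + m) % k)) := by
    intro m
    induction m with
    | zero => intro a ha; rw [Nat.add_zero, Nat.mod_eq_of_lt ha]
    | succ m ih =>
      intro a ha
      refine (ih a ha).tail ?_
      have := hR ((a + m) % k) (Nat.mod_lt _ hk)
      rw [Nat.mod_add_mod] at this; rwa [← Nat.add_assoc]
  intro a ha b hb
  have := key (b + k - a) a ha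
  have h2 : (a + (b + k - a)) % k = b := by
    have : a + (b + k - a) = b + k := by omega
    rw [this, Nat.add_mod_right, Nat.mod_eq_of_lt hb]
  rwa [h2] at this

/-- backward cycle: reach anywhere along reversed edges -/
private lemma cycle_bwd {V : Type*} {R : V → V → Prop} {k : ℕ} {c : ℕ → V}
    (hk : 1 ≤ k) (hR : ∀ i < k, R (c ((i + 1) % k)) (c i)) :
    ∀ a < k, ∀ b < k, Relation.ReflTransGen R (c a) (c b) := by
  have key : ∀ m a, a < k → Relation.ReflTransGen R (c ((a + m) % k)) (c a) := by
    intro m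
    induction m with
    | zero => intro a ha; rw [Nat.add_zero, Nat.mod_eq_of_lt ha]
    | succ m ih =>
      intro a ha
      refine Relation.ReflTransGen.head ?_ (ih a ha)
      have := hR ((a + m) % k) (Nat.mod_lt _ hk)
      rw [Nat.mod_add_mod] at this; rwa [← Nat.add_assoc]
  intro a ha b hb
  have := key (a + k - b) b hb
  have h2 : (b + (a + k - b)) % k = a := by
    have : b + (a + k - b) = a + k := by omega
    rw [this, Nat.add_mod_right, Nat.mod_eq_of_lt ha]
  rwa [h2] at this

/-- reversing a directed cycle preserves the reachability relation. -/
theorem reverseCycle_reach {V : Type*} (E : V → V → Prop) (k : ℕ) (c : ℕ → V)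
    (hc : IsDirectedCycle E k c) :
    ∀ u v, Relation.ReflTransGen E u v ↔ Relation.ReflTransGen (ReverseCycle E k c) u v := by
  obtain ⟨hk, _, hE⟩ := hc
  intro u v
  constructor
  · refine rtg_lift (fun a b hab => ?_)
    by_cases h : ∃ i < k, a = c i ∧ b = c ((i + 1) % k)
    · obtain ⟨i, hi, rfl, rfl⟩ := h
      exact cycle_bwd (R := ReverseCycle E k c) hk (fun j hj => Or.inr ⟨j, hj, rfl, rfl⟩) i hi _ (Nat.mod_lt _ hk)
    · exact Relation.ReflTransGen.single (Or.inl ⟨hab, h⟩)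
  · refine rtg_lift (fun a b hab => ?_)
    rcases hab with ⟨hE', _⟩ | ⟨i, hi, rfl, rfl⟩
    · exact Relation.ReflTransGen.single hE'
    · exact cycle_fwd hk hE _ (Nat.mod_lt _ hk) i hi
end

section
/- Let E be an edge relation on V and let E' be obtained from E by reversing a directed cycle c₀, …, c_{k−1} (k ≥ 1, pairwise distinct vertices). Then E and E' have the same SCC equivalence relation: for all u, v, u ∼_E v if and only if u ∼_{E'} v. -/
/-!
Reversing a cycle does not even change reachability. Every reversed edge `c (i+1) → c i` is
realised in `E` by walking forward around the cycle, and every removed edge `c i → c (i+1)` is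
realised in the reversed graph by walking backward around it. Hence the reflexive-transitive
closures of the two edge relations coincide, and so do their SCCs.
-/

namespace Relation

variable {V : Type*} {F : V → V → Prop} {k : ℕ} {c : ℕ → V}

theorem ReflTransGen.cyclic_add
    (h : ∀ i < k, ReflTransGen F (c i) (c ((i + 1) % k))) {i : ℕ} (hi : i < k) (n : ℕ) :
    ReflTransGen F (c i) (c ((i + n) % k)) := by
  induction n with
  | zero => rw [Nat.add_zero, Nat.mod_eq_of_lt hi]
  | succ n ih =>
    have step := h ((i + n) % k) (Nat.mod_lt _ (Nat.zero_lt_of_lt hi))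
    rw [Nat.mod_add_mod] at step
    exact ih.trans step

theorem ReflTransGen.cyclic
    (h : ∀ i < k, ReflTransGen F (c i) (c ((i + 1) % k))) {i j : ℕ} (hi : i < k) (hj : j < k) :
    ReflTransGen F (c i) (c j) := by
  have hij : (i + (k - i + j)) % k = j := by
    rw [show i + (k - i + j) = j + k by omega, Nat.add_mod_right, Nat.mod_eq_of_lt hj]
  simpa only [hij] using ReflTransGen.cyclic_add h hi (k - i + j)

theorem ReflTransGen.cyclic_of_swap
    (h : ∀ i < k, ReflTransGen F (c ((i + 1) % k)) (c i)) {i j : ℕ} (hi : i < k) (hj : j < k) :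
    ReflTransGen F (c i) (c j) :=
  reflTransGen_swap.mp <|
    ReflTransGen.cyclic (F := Function.swap F) (fun i hi => reflTransGen_swap.mpr (h i hi)) hj hi

end Relation

open Relation

section ReverseCycle

variable {V : Type*} {E : V → V → Prop} {k : ℕ} {c : ℕ → V}

theorem reflTransGen_reverseCycle_of_edge {u v : V} (huv : E u v) :
    ReflTransGen (ReverseCycle E k c) u v := by
  by_cases hcyc : ∃ i < k, u = c i ∧ v = c ((i + 1) % k)
  · obtain ⟨i, hi, rfl, rfl⟩ := hcyc
    exact ReflTransGen.cyclic_of_swap (F := ReverseCycle E k c)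
      (fun j hj => ReflTransGen.single (Or.inr ⟨j, hj, rfl, rfl⟩)) hi (Nat.mod_lt _ (by omega))
  · exact ReflTransGen.single (Or.inl ⟨huv, hcyc⟩)

theorem reflTransGen_of_reverseCycle (hE : ∀ i < k, E (c i) (c ((i + 1) % k))) {u v : V}
    (huv : ReverseCycle E k c u v) : ReflTransGen E u v := by
  rcases huv with ⟨huv, -⟩ | ⟨i, hi, rfl, rfl⟩
  · exact ReflTransGen.single huv
  · exact ReflTransGen.cyclic (fun j hj => ReflTransGen.single (hE j hj))
      (Nat.mod_lt _ (by omega)) hi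

theorem reflTransGen_reverseCycle_iff (hE : ∀ i < k, E (c i) (c ((i + 1) % k))) {u v : V} :
    ReflTransGen (ReverseCycle E k c) u v ↔ ReflTransGen E u v :=
  ⟨ReflTransGen.lift' id (fun _ _ => reflTransGen_of_reverseCycle hE) u v,
    ReflTransGen.lift' id (fun _ _ => reflTransGen_reverseCycle_of_edge) u v⟩

end ReverseCycle

/-- reversing a directed cycle preserves the SCC equivalence relation. -/
theorem reverseCycle_sccEq {V : Type*} (E : V → V → Prop) (k : ℕ) (c : ℕ → V)
    (hc : IsDirectedCycle E k c) :
    ∀ u v, SCCEq E u v ↔ SCCEq (ReverseCycle E k c) u v := by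
  intro u v
  simp only [SCCEq, reflTransGen_reverseCycle_iff hc.2.2]
end

section
/- Let E be an edge relation on V and let E' be obtained from E by reversing a directed cycle c₀, …, c_{k−1} (k ≥ 1, pairwise distinct vertices). Then E and E' have exactly the same inter-SCC edges: for all u, v with u and v not in the same SCC of E, one has E u v if and only if E' u v. (Cycle reversal acts only on intra-SCC edges.) -/
/-- cycle reversal acts only on intra-SCC edges: the inter-SCC
edges of `E` and of its cycle reversal coincide. -/
theorem reverseCycle_interSCC_edges {V : Type*} (E : V → V → Prop) (k : ℕ) (c : ℕ → V)
    (hc : IsDirectedCycle E k c) :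
    ∀ u v, ¬ SCCEq E u v → (E u v ↔ ReverseCycle E k c u v) := by
  obtain ⟨hk, _hinj, hedge⟩ := hc
  have hreach : ∀ m i, i < k → Relation.ReflTransGen E (c i) (c ((i + m) % k)) := by
    intro m
    induction m with
    | zero => intro i hi; simp only [Nat.add_zero, Nat.mod_eq_of_lt hi]; exact Relation.ReflTransGen.refl
    | succ m ih =>
      intro i hi
      refine (ih i hi).tail ?_
      have h1 : ((i + m) % k + 1) % k = (i + m + 1) % k := Nat.mod_add_mod _ _ _
      have := hedge ((i + m) % k) (Nat.mod_lt _ (by omega))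
      rwa [h1, show i + m + 1 = i + (m + 1) by omega] at this
  have hscc : ∀ i < k, ∀ j < k, SCCEq E (c i) (c j) := by
    have key : ∀ i < k, ∀ j < k, Relation.ReflTransGen E (c i) (c j) := by
      intro i hi j hj
      have := hreach (k - i + j) i hi
      have h2 : (i + (k - i + j)) % k = j := by
        have : i + (k - i + j) = k + j := by omega
        rw [this, Nat.add_mod_left, Nat.mod_eq_of_lt hj]
      rwa [h2] at this
    exact fun i hi j hj => ⟨key i hi j hj, key j hj i hi⟩
  intro u v huv
  constructor
  · intro h
    left
    refine ⟨h, ?_⟩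
    rintro ⟨i, hi, rfl, rfl⟩
    exact huv (hscc i hi _ (Nat.mod_lt _ (by omega)))
  · rintro (⟨h, -⟩ | ⟨i, hi, rfl, rfl⟩)
    · exact h
    · exact absurd (hscc _ (Nat.mod_lt _ (by omega)) i hi) huv
end

section
/- Let E and E' be edge relations on V such that E' is obtained from E by a finite sequence of directed-cycle reversals (each step reverses some directed cycle of the current graph). Then E and E' have the same condensation: the SCC equivalence relations of E and E' coincide, and for any pair of distinct SCC classes π, π', there exist u ∈ π, v ∈ π' with E u v if and only if there exist u ∈ π, v ∈ π' with E' u v. -/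
/-- One step: `F'` is obtained from `F` by reversing some directed cycle of `F`. -/
def CycleReversalStep {V : Type*} (F F' : V → V → Prop) : Prop :=
  ∃ k c, IsDirectedCycle F k c ∧ F' = ReverseCycle F k c

section Aux

variable {V : Type*}

lemma sccEq_symm {E : V → V → Prop} {u v : V} (h : SCCEq E u v) : SCCEq E v u := ⟨h.2, h.1⟩

lemma sccEq_trans {E : V → V → Prop} {u v w : V} (h1 : SCCEq E u v) (h2 : SCCEq E v w) :
    SCCEq E u w := ⟨h1.1.trans h2.1, h2.2.trans h1.2⟩

lemma rtg_mono {G H : V → V → Prop} (h : ∀ a b, G a b → Relation.ReflTransGen H a b)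
    {u v : V} (huv : Relation.ReflTransGen G u v) : Relation.ReflTransGen H u v := by
  induction huv with
  | refl => exact .refl
  | tail _ hab ih => exact ih.trans (h _ _ hab)

lemma reach_cycle (G : V → V → Prop) (k : ℕ) (P : ℕ → V) (hk : 1 ≤ k)
    (h : ∀ i < k, Relation.ReflTransGen G (P i) (P ((i + 1) % k))) :
    ∀ i < k, ∀ j < k, Relation.ReflTransGen G (P i) (P j) := by
  have aux : ∀ n, ∀ i < k, Relation.ReflTransGen G (P i) (P ((i + n) % k)) := by
    intro n
    induction n with
    | zero => intro i hi; simpa [Nat.mod_eq_of_lt hi] using Relation.ReflTransGen.refl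
    | succ n ih =>
      intro i hi
      have h1 := ih i hi
      have h2 := h ((i + n) % k) (Nat.mod_lt _ (by omega))
      have e : ((i + n) % k + 1) % k = (i + (n + 1)) % k := by
        rw [Nat.mod_add_mod]; ring_nf
      rw [e] at h2
      exact h1.trans h2
  intro i hi j hj
  have := aux (j + k - i) i hi
  have e : (i + (j + k - i)) % k = j := by
    have e1 : i + (j + k - i) = j + k := by omega
    rw [e1, Nat.add_mod_right, Nat.mod_eq_of_lt hj]
  rwa [e] at this

lemma cyc_reach {F : V → V → Prop} {k : ℕ} {c : ℕ → V} (hcyc : IsDirectedCycle F k c) :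
    ∀ i < k, ∀ j < k, Relation.ReflTransGen F (c i) (c j) :=
  reach_cycle F k c hcyc.1 (fun i hi => .single (hcyc.2.2 i hi))

lemma rev_reach {F : V → V → Prop} {k : ℕ} {c : ℕ → V} (hcyc : IsDirectedCycle F k c) :
    ∀ i < k, ∀ j < k, Relation.ReflTransGen (ReverseCycle F k c) (c i) (c j) := by
  obtain ⟨hk, -, -⟩ := hcyc
  have base : ∀ i < k, ReverseCycle F k c (c ((i + 1) % k)) (c i) :=
    fun i hi => Or.inr ⟨i, hi, rfl, rfl⟩
  have main := reach_cycle (ReverseCycle F k c) k (fun a => c ((k - 1 - a) % k)) hk ?_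
  · intro i hi j hj
    have := main (k - 1 - i) (by omega) (k - 1 - j) (by omega)
    have e1 : (k - 1 - (k - 1 - i)) % k = i := by
      have : k - 1 - (k - 1 - i) = i := by omega
      rw [this, Nat.mod_eq_of_lt hi]
    have e2 : (k - 1 - (k - 1 - j)) % k = j := by
      have : k - 1 - (k - 1 - j) = j := by omega
      rw [this, Nat.mod_eq_of_lt hj]
    simpa [e1, e2] using this
  · intro a ha
    by_cases hak : a + 1 < k
    · have h1 : (a + 1) % k = a + 1 := Nat.mod_eq_of_lt hak
      have hb := base (k - 2 - a) (by omega)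
      have e1 : (k - 2 - a + 1) % k = (k - 1 - a) % k := by congr 1; omega
      rw [e1] at hb
      have e2 : (k - 1 - (a + 1)) % k = (k - 2 - a) % k := by congr 1; omega
      have e3 : (k - 2 - a) % k = k - 2 - a := Nat.mod_eq_of_lt (by omega)
      simp only [h1, e2, e3]
      exact .single hb
    · have ha1 : a = k - 1 := by omega
      have h1 : (a + 1) % k = 0 := by
        have : a + 1 = k := by omega
        rw [this, Nat.mod_self]
      have hb := base (k - 1) (by omega)
      have e1 : (k - 1 + 1) % k = 0 := by
        have : k - 1 + 1 = k := by omega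
        rw [this, Nat.mod_self]
      rw [e1] at hb
      have e2 : (k - 1 - a) % k = 0 := by
        have : k - 1 - a = 0 := by omega
        rw [this, Nat.zero_mod]
      have e3 : (k - 1 - 0) % k = k - 1 := Nat.mod_eq_of_lt (by omega)
      simp only [h1, e2, e3]
      exact .single hb

lemma step_reach_iff {F : V → V → Prop} {k : ℕ} {c : ℕ → V} (hcyc : IsDirectedCycle F k c)
    (u v : V) :
    Relation.ReflTransGen F u v ↔ Relation.ReflTransGen (ReverseCycle F k c) u v := by
  constructor
  · refine rtg_mono fun a b hab => ?_
    by_cases hc : ∃ i < k, a = c i ∧ b = c ((i + 1) % k)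
    · obtain ⟨i, hi, rfl, rfl⟩ := hc
      exact rev_reach hcyc i hi _ (Nat.mod_lt _ (by have := hcyc.1; omega))
    · exact .single (Or.inl ⟨hab, hc⟩)
  · refine rtg_mono fun a b hab => ?_
    rcases hab with ⟨hab, -⟩ | ⟨i, hi, rfl, rfl⟩
    · exact .single hab
    · exact cyc_reach hcyc _ (Nat.mod_lt _ (by have := hcyc.1; omega)) _ hi

lemma step_scc_iff {F : V → V → Prop} {k : ℕ} {c : ℕ → V} (hcyc : IsDirectedCycle F k c)
    (u v : V) : SCCEq F u v ↔ SCCEq (ReverseCycle F k c) u v := by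
  unfold SCCEq
  rw [step_reach_iff hcyc, step_reach_iff hcyc]

lemma step_edge_iff {F : V → V → Prop} {k : ℕ} {c : ℕ → V} (hcyc : IsDirectedCycle F k c)
    (u v : V) (hne : ¬ SCCEq F u v) :
    (∃ a b, SCCEq F a u ∧ SCCEq F b v ∧ F a b) ↔
      (∃ a b, SCCEq F a u ∧ SCCEq F b v ∧ ReverseCycle F k c a b) := by
  have hcc : ∀ i < k, ∀ j < k, SCCEq F (c i) (c j) :=
    fun i hi j hj => ⟨cyc_reach hcyc i hi j hj, cyc_reach hcyc j hj i hi⟩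
  constructor
  · rintro ⟨a, b, h1, h2, hab⟩
    by_cases hc : ∃ i < k, a = c i ∧ b = c ((i + 1) % k)
    · obtain ⟨i, hi, rfl, rfl⟩ := hc
      exact absurd (sccEq_trans (sccEq_symm h1)
        (sccEq_trans (hcc i hi _ (Nat.mod_lt _ (by have := hcyc.1; omega))) h2)) hne
    · exact ⟨a, b, h1, h2, Or.inl ⟨hab, hc⟩⟩
  · rintro ⟨a, b, h1, h2, ⟨hab, -⟩ | ⟨i, hi, rfl, rfl⟩⟩
    · exact ⟨a, b, h1, h2, hab⟩
    · exact absurd (sccEq_trans (sccEq_symm h1)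
        (sccEq_trans (hcc _ (Nat.mod_lt _ (by have := hcyc.1; omega)) i hi) h2)) hne

end Aux

/-- a finite sequence of directed-cycle reversals preserves the
condensation: the SCC equivalence relations coincide, and distinct SCC classes
are connected by an edge of `E` iff they are connected by an edge of `E'`. -/
theorem cycleReversals_same_condensation {V : Type*} (E E' : V → V → Prop)
    (h : Relation.ReflTransGen CycleReversalStep E E') :
    (∀ u v, SCCEq E u v ↔ SCCEq E' u v) ∧
      ∀ u v, ¬ SCCEq E u v →
        ((∃ a b, SCCEq E a u ∧ SCCEq E b v ∧ E a b) ↔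
          (∃ a b, SCCEq E a u ∧ SCCEq E b v ∧ E' a b)) := by
  induction h with
  | refl => exact ⟨fun _ _ => Iff.rfl, fun _ _ _ => Iff.rfl⟩
  | @tail F F' _ hstep ih =>
    obtain ⟨ihscc, ihedge⟩ := ih
    obtain ⟨k, c, hcyc, rfl⟩ := hstep
    refine ⟨fun u v => (ihscc u v).trans (step_scc_iff hcyc u v), fun u v hne => ?_⟩
    have hneF : ¬ SCCEq F u v := fun hF => hne ((ihscc u v).mpr hF)
    refine (ihedge u v hne).trans ?_
    have conv : ∀ (G : V → V → Prop),
        (∃ a b, SCCEq E a u ∧ SCCEq E b v ∧ G a b) ↔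
          (∃ a b, SCCEq F a u ∧ SCCEq F b v ∧ G a b) := by
      intro G
      constructor <;> rintro ⟨a, b, h1, h2, h3⟩
      · exact ⟨a, b, (ihscc a u).mp h1, (ihscc b v).mp h2, h3⟩
      · exact ⟨a, b, (ihscc a u).mpr h1, (ihscc b v).mpr h2, h3⟩
    rw [conv, conv]
    exact step_edge_iff hcyc u v hneF
end

section
/- Let E be an edge relation on V, let σ : V ≃ V be a bijection with σ v ∼_E v for every v (σ permutes vertices within each SCC of E), and let E' be the pushforward graph, E' u v iff E (σ⁻¹ u) (σ⁻¹ v). Then E and E' have the same SCC equivalence relation, and for any pair of distinct SCC classes π, π', there exist u ∈ π, v ∈ π' with E u v if and only if there exist u ∈ π, v ∈ π' with E' u v. (Relabelling vertices within SCCs shifts variable-level endpoints of inter-SCC edges but leaves the condensation unchanged.) -/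
/-- relabelling vertices within SCCs (a bijection `σ` with
`σ v ∼_E v` for all `v`) leaves the condensation unchanged: the pushforward
graph `E' u v ↔ E (σ⁻¹ u) (σ⁻¹ v)` has the same SCC equivalence relation, and
distinct SCC classes are connected by an `E`-edge iff by an `E'`-edge. -/
theorem intraSCC_relabel_same_condensation {V : Type*} (E : V → V → Prop)
    (σ : V ≃ V) (hσ : ∀ v, SCCEq E (σ v) v)
    (E' : V → V → Prop) (hE' : ∀ u v, E' u v ↔ E (σ.symm u) (σ.symm v)) :
    (∀ u v, SCCEq E u v ↔ SCCEq E' u v) ∧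
      ∀ u v, ¬ SCCEq E u v →
        ((∃ a b, SCCEq E a u ∧ SCCEq E b v ∧ E a b) ↔
          (∃ a b, SCCEq E a u ∧ SCCEq E b v ∧ E' a b)) := by
  have esymm : ∀ u v : V, SCCEq E u v → SCCEq E v u := fun u v h => ⟨h.2, h.1⟩
  have etrans : ∀ u v w : V, SCCEq E u v → SCCEq E v w → SCCEq E u w :=
    fun u v w h1 h2 => ⟨h1.1.trans h2.1, h2.2.trans h1.2⟩
  have hσ' : ∀ v : V, SCCEq E v (σ.symm v) := by
    intro v
    simpa using hσ (σ.symm v)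
  have fwd : ∀ x y : V, Relation.ReflTransGen E x y →
      Relation.ReflTransGen E' (σ x) (σ y) := by
    intro x y h
    induction h with
    | refl => exact .refl
    | tail _ hstep ih => exact ih.tail ((hE' _ _).2 (by simpa using hstep))
  have bwd : ∀ x y : V, Relation.ReflTransGen E' x y →
      Relation.ReflTransGen E (σ.symm x) (σ.symm y) := by
    intro x y h
    induction h with
    | refl => exact .refl
    | tail _ hstep ih => exact ih.tail ((hE' _ _).1 hstep)
  have key : ∀ u v : V, SCCEq E u v ↔ SCCEq E' u v := by
    intro u v
    constructor
    · intro h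
      have h' : SCCEq E (σ.symm u) (σ.symm v) :=
        etrans _ _ _ (esymm _ _ (hσ' u)) (etrans _ _ _ h (hσ' v))
      have f1 := fwd _ _ h'.1
      have f2 := fwd _ _ h'.2
      simp only [Equiv.apply_symm_apply] at f1 f2
      exact ⟨f1, f2⟩
    · intro h
      have h' : SCCEq E (σ.symm u) (σ.symm v) := ⟨bwd _ _ h.1, bwd _ _ h.2⟩
      exact etrans _ _ _ (hσ' u) (etrans _ _ _ h' (esymm _ _ (hσ' v)))
  refine ⟨key, fun u v _ => ?_⟩
  constructor
  · rintro ⟨a, b, hau, hbv, hab⟩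
    refine ⟨σ a, σ b, etrans _ _ _ (hσ a) hau, etrans _ _ _ (hσ b) hbv, ?_⟩
    rw [hE']
    simpa using hab
  · rintro ⟨a, b, hau, hbv, hab⟩
    exact ⟨σ.symm a, σ.symm b, etrans _ _ _ (esymm _ _ (hσ' a)) hau,
      etrans _ _ _ (esymm _ _ (hσ' b)) hbv, (hE' _ _).1 hab⟩
end

section
/- Let n be a finite index type, B : Matrix n n ℝ, and define the support relation R i j iff B i j ≠ 0. Let ∼ denote the SCC equivalence: i ∼ j iff i reaches j and j reaches i under the reflexive-transitive closure of R. Let S ⊆ n be closed under ∼ (i ∈ S and i ∼ j imply j ∈ S). If 1 − B is invertible, then the principal submatrix of 1 − B with rows and columns restricted to the complement of S (as a matrix indexed by the subtype {i // i ∉ S}) is also invertible. -/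
/-!
A permutation `σ` contributing a nonzero term `∏ i, (1 - B) (σ i) i` to the Leibniz expansion of
`det (1 - B)` has `B (σ i) i ≠ 0` whenever `σ i ≠ i`, so each of its cycles is a closed walk in the
support graph of `B` and therefore stays inside one strongly connected component. Such a `σ`
preserves `S`, so the entries of `1 - B` linking `S` with its complement contribute nothing to the
determinant: `det (1 - B)` is the product of the determinants of the principal blocks on `S` and
on its complement, and the latter is a unit because the former product is.
-/

open Matrix

open Equiv

theorem SCCEq.symm {V : Type*} {E : V → V → Prop} {u v : V} (h : SCCEq E u v) : SCCEq E v u :=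
  ⟨h.2, h.1⟩

theorem sccEq_apply_of_forall_reflTransGen {V : Type*} [Finite V] {E : V → V → Prop}
    {σ : Perm V} (hσ : ∀ j, Relation.ReflTransGen E (σ j) j) (i : V) : SCCEq E i (σ i) := by
  have hpow : ∀ (k : ℕ) (j : V), Relation.ReflTransGen E ((σ ^ k) j) j := by
    intro k
    induction k with
    | zero => exact fun j => .refl
    | succ k ih =>
      intro j
      simpa only [pow_succ, Perm.mul_apply] using (ih (σ j)).trans (hσ j)
  obtain ⟨k, hk⟩ := (Perm.sameCycle_apply_left.mpr (Perm.SameCycle.refl σ i)).exists_nat_pow_eq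
  exact ⟨by simpa only [hk] using hpow k (σ i), hσ i⟩

namespace Matrix

variable {n R : Type*} [Fintype n] [DecidableEq n] [CommRing R]

theorem det_ite_eq_det_of_forall_perm (M : Matrix n n R) (P : n → n → Prop) [∀ i j, Decidable (P i j)]
    (h : ∀ σ : Perm n, (∀ i, M (σ i) i ≠ 0) → ∀ i, P (σ i) i) :
    det (of fun i j => if P i j then M i j else 0) = det M := by
  rw [det_apply', det_apply']
  refine Finset.sum_congr rfl fun σ _ => congrArg _ ?_
  by_cases hσ : ∀ i, M (σ i) i ≠ 0
  · exact Finset.prod_congr rfl fun i _ => by simp [h σ hσ i]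
  · push Not at hσ
    obtain ⟨i, hi⟩ := hσ
    rw [Finset.prod_eq_zero (Finset.mem_univ i) (by simp [hi]),
      Finset.prod_eq_zero (f := fun j => M (σ j) j) (Finset.mem_univ i) hi]

theorem det_eq_mul_of_forall_perm_preserves (M : Matrix n n R) (p : n → Prop) [DecidablePred p]
    (h : ∀ σ : Perm n, (∀ i, M (σ i) i ≠ 0) → ∀ i, (p (σ i) ↔ p i)) :
    M.det = (toSquareBlockProp M p).det * (toSquareBlockProp M fun i => ¬p i).det := by
  rw [← det_ite_eq_det_of_forall_perm M (fun i j => p i ↔ p j) h,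
    twoBlockTriangular_det _ p fun i hi j hj => by simp [hi, hj]]
  congr 2 <;> ext i j <;> simp [toSquareBlockProp_def, i.2, j.2]

end Matrix

/-- if `S` is a union of SCCs of the support graph of `B`
and `1 - B` is invertible, then the principal submatrix of `1 - B` on the
complement of `S` is invertible. -/
theorem principal_submatrix_invertible {n : Type*} [Fintype n] [DecidableEq n]
    (B : Matrix n n ℝ) (S : Set n) [DecidablePred (· ∈ S)]
    (hS : ∀ i j, i ∈ S → SCCEq (fun a b => B a b ≠ 0) i j → j ∈ S)
    (h : IsUnit ((1 : Matrix n n ℝ) - B)) :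
    IsUnit (((1 : Matrix n n ℝ) - B).submatrix
      (fun i : {i : n // i ∉ S} => (i : n)) (fun j : {j : n // j ∉ S} => (j : n))) := by
  have hperm : ∀ σ : Perm n, (∀ i, (1 - B) (σ i) i ≠ 0) → ∀ i, (σ i ∈ S ↔ i ∈ S) := by
    intro σ hσ i
    have hscc : SCCEq (fun a b => B a b ≠ 0) i (σ i) := by
      refine sccEq_apply_of_forall_reflTransGen (fun j => ?_) i
      by_cases hj : σ j = j
      · rw [hj]
      · exact .single fun hB => hσ j (by simp [one_apply_ne hj, hB])
    exact ⟨fun hi => hS _ _ hi hscc.symm, fun hi => hS _ _ hi hscc⟩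
  rw [isUnit_iff_isUnit_det] at h ⊢
  rw [det_eq_mul_of_forall_perm_preserves _ _ hperm] at h
  exact isUnit_of_mul_isUnit_right h
end

section
/- Let n be a finite index type, R : n → n → Prop a reflexive and transitive relation, and M : Matrix n n ℝ an invertible matrix whose support is contained in R (M i j ≠ 0 implies R i j). Then the support of M⁻¹ is also contained in R: (M⁻¹) i j ≠ 0 implies R i j. In particular, for an invertible 1 − B, a nonzero entry of the mixing matrix A = (1 − B)⁻¹ at position (i, j) implies that j reaches i in the support graph of B, so the support of A is contained in the transitive closure (reachability relation) of the graph. -/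
open Matrix Polynomial

private lemma pow_support_subset {n : Type*} [Fintype n] [DecidableEq n]
    (R : n → n → Prop) (hrefl : Reflexive R) (htrans : Transitive R)
    (M : Matrix n n ℝ) (hsupp : ∀ i j, M i j ≠ 0 → R i j) :
    ∀ k, ∀ i j, (M ^ k) i j ≠ 0 → R i j := by
  intro k
  induction k with
  | zero =>
    intro i j h
    simp only [pow_zero, Matrix.one_apply, ne_eq, ite_eq_right_iff, not_forall] at h
    exact h.1 ▸ hrefl i
  | succ k ih =>
    intro i j h
    rw [pow_succ, Matrix.mul_apply] at h
    obtain ⟨l, hl⟩ := Finset.exists_ne_zero_of_sum_ne_zero h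
    exact htrans (ih i l fun h0 => hl.2 (by rw [h0, zero_mul]))
      (hsupp l j fun h0 => hl.2 (by rw [h0, mul_zero]))

private lemma aeval_support_subset {n : Type*} [Fintype n] [DecidableEq n]
    (R : n → n → Prop) (hrefl : Reflexive R) (htrans : Transitive R)
    (M : Matrix n n ℝ) (hsupp : ∀ i j, M i j ≠ 0 → R i j) (p : ℝ[X]) :
    ∀ i j, (aeval M p) i j ≠ 0 → R i j := by
  intro i j h
  rw [aeval_eq_sum_range] at h
  have : (∑ k ∈ Finset.range (p.natDegree + 1), p.coeff k • M ^ k) i j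
      = ∑ k ∈ Finset.range (p.natDegree + 1), p.coeff k • (M ^ k) i j := by
    simp [Matrix.sum_apply]
  rw [this] at h
  obtain ⟨k, hk⟩ := Finset.exists_ne_zero_of_sum_ne_zero h
  exact pow_support_subset R hrefl htrans M hsupp k i j
    fun h0 => hk.2 (by rw [h0, smul_zero])

/-- if `M` is invertible and its support is contained in a
reflexive transitive relation `R`, then the support of `M⁻¹` is also contained
in `R`. In particular the support of the mixing matrix `A = (1 - B)⁻¹` is
contained in the reachability relation of the support graph of `B`. -/
theorem inverse_support_subset {n : Type*} [Fintype n] [DecidableEq n]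
    (R : n → n → Prop) (hrefl : Reflexive R) (htrans : Transitive R)
    (M : Matrix n n ℝ) (hM : IsUnit M)
    (hsupp : ∀ i j, M i j ≠ 0 → R i j) :
    ∀ i j, M⁻¹ i j ≠ 0 → R i j := by
  have hdet : IsUnit M.det := (Matrix.isUnit_iff_isUnit_det M).mp hM
  have hc0 : M.charpoly.coeff 0 ≠ 0 := by
    intro h
    apply hdet.ne_zero
    rw [Matrix.det_eq_sign_charpoly_coeff, h, mul_zero]
  set c := M.charpoly.coeff 0 with hc
  set q : ℝ[X] := M.charpoly.divX with hq
  have hch : M.charpoly = Polynomial.X * q + Polynomial.C c := by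
    rw [hq, hc, mul_comm]
    exact (Polynomial.divX_mul_X_add M.charpoly).symm
  have h0 : aeval M M.charpoly = 0 := M.aeval_self_charpoly
  rw [hch, map_add, _root_.map_mul, aeval_X, aeval_C] at h0
  have hinv : M * (-(c⁻¹) • aeval M q) = 1 := by
    have : M * aeval M q = -(algebraMap ℝ (Matrix n n ℝ) c) := by
      rw [eq_neg_iff_add_eq_zero]
      exact h0
    rw [Matrix.mul_smul, this, Algebra.algebraMap_eq_smul_one]
    rw [smul_neg, neg_smul, neg_neg, smul_smul, inv_mul_cancel₀ hc0, one_smul]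
  have hMinv : M⁻¹ = -(c⁻¹) • aeval M q := Matrix.inv_eq_right_inv hinv
  intro i j h
  rw [hMinv] at h
  apply aeval_support_subset R hrefl htrans M hsupp q i j
  intro h0
  apply h
  simp [Matrix.smul_apply, h0]
end

section
/- Let n be a finite index type, B : Matrix n n ℝ, S ⊆ n a set of indices (the intervened cluster), c : n → ℝ prescribed intervention values, and ε : n → ℝ. Suppose the principal submatrix of 1 − B with rows and columns restricted to the complement of S is invertible. Then there exists a unique x : n → ℝ such that x i = c i for all i ∈ S and x i = (B.mulVec x) i + ε i for all i ∉ S. (Hard cluster interventions on a linear cyclic SCM yield a well-defined interventional solution.) -/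
open Matrix

/-- if the principal submatrix of `1 - B` on the complement of
the intervened cluster `S` is invertible, then the hard cluster intervention
`do(X_S = c)` on the linear cyclic SCM `X = BX + ε` has a unique solution. -/
theorem hard_cluster_intervention_unique {n : Type*} [Fintype n] [DecidableEq n]
    (B : Matrix n n ℝ) (S : Set n) [DecidablePred (· ∈ S)] (c ε : n → ℝ)
    (h : IsUnit (((1 : Matrix n n ℝ) - B).submatrix
      (fun i : {i : n // i ∉ S} => (i : n)) (fun j : {j : n // j ∉ S} => (j : n)))) :
    ∃! x : n → ℝ, (∀ i ∈ S, x i = c i) ∧ ∀ i ∉ S, x i = B.mulVec x i + ε i := by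
  classical
  set A : Matrix {i : n // i ∉ S} {i : n // i ∉ S} ℝ :=
    ((1 : Matrix n n ℝ) - B).submatrix (fun i => (i : n)) (fun j => (j : n)) with hAdef
  have hdet : IsUnit A.det := (Matrix.isUnit_iff_isUnit_det A).1 h
  have hinv : Invertible A := A.invertibleOfIsUnitDet hdet
  set d : {i : n // i ∉ S} → ℝ :=
    fun i => ε i + ∑ j ∈ Finset.univ.filter (· ∈ S), B i j * c j with hddef
  have key : ∀ x : n → ℝ, (∀ i ∈ S, x i = c i) →
      ((∀ i ∉ S, x i = B.mulVec x i + ε i) ↔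
        A.mulVec (fun j => x j) = d) := by
    intro x hxc
    have hAx : ∀ i : {i : n // i ∉ S},
        A.mulVec (fun j => x j) i
          = x i - ∑ j ∈ Finset.univ.filter (· ∉ S), B i j * x j := by
      intro i
      have h1 : A.mulVec (fun j => x j) i
          = ∑ j ∈ Finset.univ.filter (· ∉ S), ((1 : Matrix n n ℝ) - B) i j * x j := by
        rw [Matrix.mulVec, dotProduct,
          Finset.sum_subtype (p := (· ∉ S)) (Finset.univ.filter (· ∉ S)) (by simp)
            (fun j => ((1 : Matrix n n ℝ) - B) i j * x j)]
        rfl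
      rw [h1]
      simp only [Matrix.sub_apply, Matrix.one_apply, sub_mul, Finset.sum_sub_distrib,
        ite_mul, one_mul, zero_mul]
      rw [Finset.sum_ite_eq]
      simp [i.2]
    constructor
    · intro hx
      funext i
      rw [hAx i]; simp only [hddef]
      have hBx : B.mulVec x i = (∑ j ∈ Finset.univ.filter (· ∈ S), B i j * x j)
          + ∑ j ∈ Finset.univ.filter (· ∉ S), B i j * x j := by
        rw [Matrix.mulVec, dotProduct,
          ← Finset.sum_filter_add_sum_filter_not Finset.univ (· ∈ S)]
      have hxi := hx i i.2
      have hc : ∑ j ∈ Finset.univ.filter (· ∈ S), B i j * x j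
          = ∑ j ∈ Finset.univ.filter (· ∈ S), B i j * c j := by
        refine Finset.sum_congr rfl fun j hj => ?_
        rw [hxc j (by simpa using hj)]
      rw [hBx, hc] at hxi
      linarith
    · intro hx i hi
      have := congrFun hx ⟨i, hi⟩
      rw [hAx ⟨i, hi⟩] at this; simp only [hddef] at this
      have hBx : B.mulVec x i = (∑ j ∈ Finset.univ.filter (· ∈ S), B i j * x j)
          + ∑ j ∈ Finset.univ.filter (· ∉ S), B i j * x j := by
        rw [Matrix.mulVec, dotProduct,
          ← Finset.sum_filter_add_sum_filter_not Finset.univ (· ∈ S)]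
      have hc : ∑ j ∈ Finset.univ.filter (· ∈ S), B i j * x j
          = ∑ j ∈ Finset.univ.filter (· ∈ S), B i j * c j := by
        refine Finset.sum_congr rfl fun j hj => ?_
        rw [hxc j (by simpa using hj)]
      rw [hBx, hc]
      linarith
  refine ⟨fun i => if hi : i ∈ S then c i else (⅟A).mulVec d ⟨i, hi⟩, ⟨?_, ?_⟩, ?_⟩
  · intro i hi; simp [hi]
  · set x₀ : n → ℝ := fun i => if hi : i ∈ S then c i else (⅟A).mulVec d ⟨i, hi⟩ with hx₀
    refine (key x₀ (fun i hi => by simp [hx₀, hi])).2 ?_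
    have hrestr : (fun j : {i : n // i ∉ S} => x₀ j) = (⅟A).mulVec d := by
      funext j
      simp only [hx₀, dif_neg j.2]
    rw [hrestr, Matrix.mulVec_mulVec, mul_invOf_self, Matrix.one_mulVec]
  · intro x' hx'
    have hAx' := (key x' hx'.1).1 hx'.2
    have hy : (fun j : {i : n // i ∉ S} => x' j) = (⅟A).mulVec d := by
      have := congrArg (⅟A).mulVec hAx'
      rwa [Matrix.mulVec_mulVec, invOf_mul_self, Matrix.one_mulVec] at this
    funext i
    by_cases hi : i ∈ S
    · simp [hi, hx'.1 i hi]
    · simp only [dif_neg hi]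
      exact congrFun hy ⟨i, hi⟩
end
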